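/- Let α > 1 and define ψ_α : ℝ → ℂ by ψ_α(t) = Γ((α+1)/2)·(1−it)^{−(α+1)/2} (principal branch). Let L ≥ 1 be a natural number and set T_s = L^{−α/(α+2)}. Let x_max ≥ 0 and y_max ≥ y_min > 0. Then for all w = u + iv and z = x + iy with |u| ≤ x_max, |x| ≤ x_max, y_min ≤ v ≤ y_max, and y_min ≤ y ≤ y_max, T_s · Σ_{ℓ=−L+1}^{L} | ψ_α((ℓT_s−u)/v) − ψ_α((ℓT_s−x)/y) |² ≤ (Γ((α+3)/2)²/y_min⁴) · (2 + 4(x_max² + y_max²)) · L^{6/(α+2)} · |w − z|². -/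

import Mathlib

/-!
Since `ψ_α' = i ψ_{α+2}` and `|ψ_{α+2}| ≤ Γ((α+3)/2)`, the wavelet `ψ_α` is
`Γ((α+3)/2)`-Lipschitz. By Lagrange's identity the two arguments at a sample point `a` satisfy
`|(a-u)/v - (a-x)/y|² ≤ ((a-u)² + v²) |w - z|² / (v y)²`. For `a = ℓ T_s` the factor
`(ℓ T_s - u)² + v²` is at most `2 ℓ² T_s² + 2 x_max² + y_max²`, and `Σ_{ℓ=-L+1}^{L} ℓ² ≤ L³`, so
the left-hand side is at most `Γ((α+3)/2)² / y_min⁴ · (2 (T_s L)³ + 2 T_s L (2 x_max² + y_max²))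
· |w - z|²`. Finally `T_s L = L^{2/(α+2)} ≤ L^{6/(α+2)}`.
-/

open Complex Real

/-- The Cauchy wavelet `ψ_α(t) = Γ((α+1)/2)·(1-it)^{-(α+1)/2}` (principal branch). -/
noncomputable def cauchyWavelet (α : ℝ) (t : ℝ) : ℂ :=
  (Real.Gamma ((α + 1) / 2) : ℂ) * (1 - Complex.I * (t : ℂ)) ^ (-(((α : ℂ) + 1) / 2))

theorem hasDerivAt_cauchyWavelet {α : ℝ} (hα : α ≠ -1) (t : ℝ) :
    HasDerivAt (cauchyWavelet α) (I * cauchyWavelet (α + 2) t) t := by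
  have hslit : 1 - I * (t : ℂ) ∈ slitPlane := by simp [mem_slitPlane_iff]
  have hlin : HasDerivAt (fun z : ℂ => 1 - I * z) (-I) (t : ℂ) := by
    simpa using ((hasDerivAt_id (t : ℂ)).const_mul I).const_sub 1
  have hΓ : Real.Gamma ((α + 2 + 1) / 2) = (α + 1) / 2 * Real.Gamma ((α + 1) / 2) := by
    rw [show (α + 2 + 1) / 2 = (α + 1) / 2 + 1 by ring,
      Real.Gamma_add_one (by contrapose! hα; linarith)]
  refine (((hlin.cpow_const (c := -(((α : ℂ) + 1) / 2)) hslit).const_mul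
    (Real.Gamma ((α + 1) / 2) : ℂ)).comp_ofReal).congr_deriv ?_
  rw [cauchyWavelet, hΓ, show -(((α : ℂ) + 1) / 2) - 1 = -((((α + 2 : ℝ) : ℂ) + 1) / 2) by
    push_cast; ring]
  push_cast
  ring

theorem norm_cauchyWavelet_le {α : ℝ} (hα : -1 ≤ α) (t : ℝ) :
    ‖cauchyWavelet α t‖ ≤ |Real.Gamma ((α + 1) / 2)| := by
  have hbase : 1 ≤ ‖1 - I * (t : ℂ)‖ := by
    simpa using Complex.abs_re_le_norm (1 - I * (t : ℂ))
  rw [cauchyWavelet, norm_mul, norm_real, Real.norm_eq_abs,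
    show -(((α : ℂ) + 1) / 2) = ((-((α + 1) / 2) : ℝ) : ℂ) by push_cast; ring, norm_cpow_real]
  exact mul_le_of_le_one_right (abs_nonneg _)
    (Real.rpow_le_one_of_one_le_of_nonpos hbase (by linarith))

theorem norm_cauchyWavelet_sub_le {α : ℝ} (hα : -1 < α) (s t : ℝ) :
    ‖cauchyWavelet α s - cauchyWavelet α t‖ ≤ Real.Gamma ((α + 3) / 2) * |s - t| := by
  have hΓ : 0 < Real.Gamma ((α + 3) / 2) := Real.Gamma_pos_of_pos (by linarith)
  have hderiv (r : ℝ) : ‖I * cauchyWavelet (α + 2) r‖ ≤ Real.Gamma ((α + 3) / 2) := by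
    rw [norm_mul, norm_I, one_mul, ← abs_of_pos hΓ, show (α + 3) / 2 = (α + 2 + 1) / 2 by ring]
    exact norm_cauchyWavelet_le (by linarith) r
  simpa [Real.norm_eq_abs] using convex_univ.norm_image_sub_le_of_norm_hasDerivWithin_le
    (fun r _ => (hasDerivAt_cauchyWavelet hα.ne' r).hasDerivWithinAt) (fun r _ => hderiv r)
    (Set.mem_univ t) (Set.mem_univ s)

theorem sum_Icc_sq_le_cube (L : ℕ) :
    ∑ ℓ ∈ Finset.Icc (-(L : ℤ) + 1) L, (ℓ : ℝ) ^ 2 ≤ (L : ℝ) ^ 3 := by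
  induction L with
  | zero => simp
  | succ n ih =>
    have hsplit : Finset.Icc (-((n + 1 : ℕ) : ℤ) + 1) ((n + 1 : ℕ) : ℤ)
        = insert (-(n : ℤ)) (insert ((n : ℤ) + 1) (Finset.Icc (-(n : ℤ) + 1) n)) := by
      ext m
      simp only [Finset.mem_Icc, Finset.mem_insert]
      omega
    rw [hsplit, Finset.sum_insert (by simp; omega), Finset.sum_insert (by simp)]
    push_cast
    nlinarith [ih, (n.cast_nonneg : (0 : ℝ) ≤ n)]

theorem card_Icc_neg_add_one (L : ℕ) : (Finset.Icc (-(L : ℤ) + 1) L).card = 2 * L := by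
  rw [Int.card_Icc]
  omega

/-- By Lagrange's identity, since the numerator `(a - u) * (y - v) + v * (x - u)` of the
difference is the inner product of `(a - u, v)` with `(y - v, x - u)`. -/
theorem sq_div_sub_div_le (a u v x y : ℝ) (hv : v ≠ 0) (hy : y ≠ 0) :
    ((a - u) / v - (a - x) / y) ^ 2
      ≤ ((a - u) ^ 2 + v ^ 2) * ((u - x) ^ 2 + (v - y) ^ 2) / (v * y) ^ 2 := by
  have hdiff : (a - u) / v - (a - x) / y = ((a - u) * (y - v) + v * (x - u)) / (v * y) := by
    field_simp
    ring
  rw [hdiff, div_pow]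
  gcongr
  nlinarith [sq_nonneg ((a - u) * (x - u) - v * (y - v))]

theorem norm_sq_cauchyWavelet_sub_le {α : ℝ} (hα : -1 < α) {y_min v y : ℝ} (hym : 0 < y_min)
    (hv : y_min ≤ v) (hy : y_min ≤ y) (a u x : ℝ) :
    ‖cauchyWavelet α ((a - u) / v) - cauchyWavelet α ((a - x) / y)‖ ^ 2
      ≤ Real.Gamma ((α + 3) / 2) ^ 2 / y_min ^ 4 * ((a - u) ^ 2 + v ^ 2)
          * ((u - x) ^ 2 + (v - y) ^ 2) := by
  have hvy : y_min ^ 2 ≤ v * y := by nlinarith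
  calc ‖cauchyWavelet α ((a - u) / v) - cauchyWavelet α ((a - x) / y)‖ ^ 2
      ≤ (Real.Gamma ((α + 3) / 2) * |(a - u) / v - (a - x) / y|) ^ 2 := by
        gcongr
        exact norm_cauchyWavelet_sub_le hα _ _
    _ = Real.Gamma ((α + 3) / 2) ^ 2 * ((a - u) / v - (a - x) / y) ^ 2 := by
        rw [mul_pow, sq_abs]
    _ ≤ Real.Gamma ((α + 3) / 2) ^ 2 *
          (((a - u) ^ 2 + v ^ 2) * ((u - x) ^ 2 + (v - y) ^ 2) / (v * y) ^ 2) := by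
        gcongr
        exact sq_div_sub_div_le a u v x y (hym.trans_le hv).ne' (hym.trans_le hy).ne'
    _ ≤ Real.Gamma ((α + 3) / 2) ^ 2 *
          (((a - u) ^ 2 + v ^ 2) * ((u - x) ^ 2 + (v - y) ^ 2) / (y_min ^ 2) ^ 2) := by
        gcongr
    _ = _ := by ring

theorem sampled_sum_norm_sq_cauchyWavelet_sub_le {α : ℝ} (hα : -1 < α) (L : ℕ) {T : ℝ}
    (hT : 0 ≤ T) {x_max y_min y_max u v x y : ℝ} (hym : 0 < y_min) (hu : |u| ≤ x_max)
    (hv1 : y_min ≤ v) (hv2 : v ≤ y_max) (hy : y_min ≤ y) :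
    T * ∑ ℓ ∈ Finset.Icc (-(L : ℤ) + 1) L,
        ‖cauchyWavelet α (((ℓ : ℝ) * T - u) / v) - cauchyWavelet α (((ℓ : ℝ) * T - x) / y)‖ ^ 2
      ≤ Real.Gamma ((α + 3) / 2) ^ 2 / y_min ^ 4
          * (2 * (T * L) ^ 3 + 2 * (T * L) * (2 * x_max ^ 2 + y_max ^ 2))
          * ((u - x) ^ 2 + (v - y) ^ 2) := by
  set C := Real.Gamma ((α + 3) / 2) ^ 2 / y_min ^ 4
  set W := (u - x) ^ 2 + (v - y) ^ 2
  set K := 2 * x_max ^ 2 + y_max ^ 2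
  have hsample (ℓ : ℤ) : ((ℓ : ℝ) * T - u) ^ 2 + v ^ 2 ≤ 2 * T ^ 2 * (ℓ : ℝ) ^ 2 + K := by
    have hu2 : u ^ 2 ≤ x_max ^ 2 := sq_le_sq' (abs_le.1 hu).1 (abs_le.1 hu).2
    nlinarith [sq_nonneg ((ℓ : ℝ) * T + u)]
  calc T * ∑ ℓ ∈ Finset.Icc (-(L : ℤ) + 1) L,
        ‖cauchyWavelet α (((ℓ : ℝ) * T - u) / v) - cauchyWavelet α (((ℓ : ℝ) * T - x) / y)‖ ^ 2
      ≤ T * ∑ ℓ ∈ Finset.Icc (-(L : ℤ) + 1) L, C * (2 * T ^ 2 * (ℓ : ℝ) ^ 2 + K) * W := by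
        gcongr with ℓ
        refine (norm_sq_cauchyWavelet_sub_le hα hym hv1 hy _ u x).trans ?_
        gcongr C * ?_ * W
        exact hsample ℓ
    _ = C * T * (2 * T ^ 2 * ∑ ℓ ∈ Finset.Icc (-(L : ℤ) + 1) L, (ℓ : ℝ) ^ 2 + 2 * L * K) * W := by
        simp only [mul_add, add_mul, Finset.sum_add_distrib, ← Finset.mul_sum, ← Finset.sum_mul,
          Finset.sum_const, card_Icc_neg_add_one, nsmul_eq_mul]
        push_cast
        ring
    _ ≤ C * T * (2 * T ^ 2 * (L : ℝ) ^ 3 + 2 * L * K) * W := by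
        gcongr
        exact sum_Icc_sq_le_cube L
    _ = C * (2 * (T * L) ^ 3 + 2 * (T * L) * K) * W := by ring

theorem rpow_neg_div_mul_self {L : ℝ} (hL : 0 < L) {α : ℝ} (hα : α + 2 ≠ 0) :
    L ^ (-α / (α + 2)) * L = L ^ (2 / (α + 2)) := by
  rw [← Real.rpow_add_one hL.ne']
  congr 1
  field_simp
  ring

theorem discretized_distance_bound_general
    (α : ℝ) (hα : 1 < α) (L : ℕ) (hL : 1 ≤ L)
    (x_max y_min y_max : ℝ) (hym : 0 < y_min)
    (u v x y : ℝ) (hu : |u| ≤ x_max)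
    (hv1 : y_min ≤ v) (hv2 : v ≤ y_max) (hy1 : y_min ≤ y) :
    (L : ℝ) ^ (-α / (α + 2)) *
        ∑ ℓ ∈ Finset.Icc (-(L : ℤ) + 1) (L : ℤ),
          ‖(cauchyWavelet α (((ℓ : ℝ) * (L : ℝ) ^ (-α / (α + 2)) - u) / v)
                - cauchyWavelet α (((ℓ : ℝ) * (L : ℝ) ^ (-α / (α + 2)) - x) / y))‖
            ^ 2
      ≤ Real.Gamma ((α + 3) / 2) ^ 2 / y_min ^ 4 * (2 + 4 * (x_max ^ 2 + y_max ^ 2))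
          * (L : ℝ) ^ (6 / (α + 2))
          * ‖((u : ℂ) + Complex.I * (v : ℂ)) - ((x : ℂ) + Complex.I * (y : ℂ))‖ ^ 2 := by
  have hL1 : (1 : ℝ) ≤ L := by exact_mod_cast hL
  have hα2 : 0 < α + 2 := by linarith
  have hTL := rpow_neg_div_mul_self (zero_lt_one.trans_le hL1) hα2.ne'
  have hcube : ((L : ℝ) ^ (2 / (α + 2))) ^ 3 = (L : ℝ) ^ (6 / (α + 2)) := by
    rw [← Real.rpow_mul_natCast (by positivity)]
    ring_nf
  have hmono : (L : ℝ) ^ (2 / (α + 2)) ≤ (L : ℝ) ^ (6 / (α + 2)) :=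
    Real.rpow_le_rpow_of_exponent_le hL1 (by gcongr; norm_num)
  have hnorm : ‖((u : ℂ) + I * v) - ((x : ℂ) + I * y)‖ ^ 2 = (u - x) ^ 2 + (v - y) ^ 2 := by
    rw [Complex.sq_norm, ← normSq_add_mul_I]
    congr 1
    push_cast
    ring
  have hsum := sampled_sum_norm_sq_cauchyWavelet_sub_le (show -1 < α by linarith) L
    (show 0 ≤ (L : ℝ) ^ (-α / (α + 2)) by positivity) hym hu hv1 hv2 hy1 (x := x)
  rw [hTL, hcube] at hsum
  rw [hnorm]
  refine hsum.trans ?_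
  calc _ ≤ Real.Gamma ((α + 3) / 2) ^ 2 / y_min ^ 4
          * ((2 + 4 * (x_max ^ 2 + y_max ^ 2)) * (L : ℝ) ^ (6 / (α + 2)))
          * ((u - x) ^ 2 + (v - y) ^ 2) := by
        gcongr
        have hK := mul_le_mul_of_nonneg_right hmono (by positivity : 0 ≤ 2 * x_max ^ 2 + y_max ^ 2)
        have hy6 : 0 ≤ (L : ℝ) ^ (6 / (α + 2)) * y_max ^ 2 := by positivity
        linarith
    _ = _ := by ring

/-- Bound on the discretized L²-distance between sampled Cauchy wavelet windows at two
time-scale points `w = u + iv` and `z = x + iy` of the upper half-plane. -/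
theorem discretized_distance_bound
    (α : ℝ) (hα : 1 < α) (L : ℕ) (hL : 1 ≤ L)
    (x_max y_min y_max : ℝ) (hxm : 0 ≤ x_max) (hym : 0 < y_min) (hyy : y_min ≤ y_max)
    (u v x y : ℝ) (hu : |u| ≤ x_max) (hx : |x| ≤ x_max)
    (hv1 : y_min ≤ v) (hv2 : v ≤ y_max) (hy1 : y_min ≤ y) (hy2 : y ≤ y_max) :
    (L : ℝ) ^ (-α / (α + 2)) *
        ∑ ℓ ∈ Finset.Icc (-(L : ℤ) + 1) (L : ℤ),
          ‖(cauchyWavelet α (((ℓ : ℝ) * (L : ℝ) ^ (-α / (α + 2)) - u) / v)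
                - cauchyWavelet α (((ℓ : ℝ) * (L : ℝ) ^ (-α / (α + 2)) - x) / y))‖
            ^ 2
      ≤ Real.Gamma ((α + 3) / 2) ^ 2 / y_min ^ 4 * (2 + 4 * (x_max ^ 2 + y_max ^ 2))
          * (L : ℝ) ^ (6 / (α + 2))
          * ‖((u : ℂ) + Complex.I * (v : ℂ)) - ((x : ℂ) + Complex.I * (y : ℂ))‖ ^ 2 :=
  discretized_distance_bound_general α hα L hL x_max y_min y_max hym u v x y hu hv1 hv2 hy1
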